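/- arXiv:2404.03250 — 3 statements merged into one kernel-verified Lean document; each statement's English description precedes it below -/
import Mathlib

section
/- For fixed x ∈ ℝ and λ > 0, the minimum over o ∈ ℝ of (1/2)(x - o)² + λ|o| equals the Huber loss h_λ(x), where h_λ(z) = z²/2 if |z| ≤ λ and h_λ(z) = λ|z| - λ²/2 otherwise. -/
/-!
Writing `t = |x - o|`, the triangle inequality `|o| ≥ |x| - t` gives
`(x - o)² / 2 + λ|o| ≥ t² / 2 - λt + λ|x| ≥ λ|x| - λ² / 2`, attained by the soft-thresholded
point `o = x (1 - λ / |x|)` when `|x| > λ`. When `|x| ≤ λ` the penalty already dominates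
`|x| |o|`, so the minimum `x² / 2` is attained at `o = 0`.
-/

variable {x lam : ℝ}

theorem sq_div_two_le_of_abs_le (h : |x| ≤ lam) (o : ℝ) :
    x ^ 2 / 2 ≤ 1 / 2 * (x - o) ^ 2 + lam * |o| := by
  have hxo : x * o ≤ |x| * |o| := by rw [← abs_mul]; exact le_abs_self _
  nlinarith [mul_le_mul_of_nonneg_right h (abs_nonneg o), sq_nonneg o]

theorem mul_abs_sub_sq_div_two_le (hlam : 0 ≤ lam) (o : ℝ) :
    lam * |x| - lam ^ 2 / 2 ≤ 1 / 2 * (x - o) ^ 2 + lam * |o| := by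
  have htri : |x| - |x - o| ≤ |o| := by
    linarith [abs_sub_abs_le_abs_sub x o]
  calc lam * |x| - lam ^ 2 / 2
      ≤ 1 / 2 * |x - o| ^ 2 + lam * (|x| - |x - o|) := by nlinarith [sq_nonneg (|x - o| - lam)]
    _ ≤ 1 / 2 * (x - o) ^ 2 + lam * |o| := by
      rw [sq_abs]; gcongr

theorem penalized_sq_soft_threshold (hlam : 0 ≤ lam) (h : lam < |x|) :
    1 / 2 * (x - x * (1 - lam / |x|)) ^ 2 + lam * |x * (1 - lam / |x|)|
      = lam * |x| - lam ^ 2 / 2 := by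
  have hx : 0 < |x| := hlam.trans_lt h
  have hshrink : 0 ≤ 1 - lam / |x| := by rw [sub_nonneg, div_le_one hx]; exact h.le
  rw [abs_mul, abs_of_nonneg hshrink]
  field_simp
  linear_combination (-lam ^ 2) * sq_abs x

theorem stmt_0 (x lam : ℝ) (hlam : 0 < lam) :
    IsLeast (Set.range fun o : ℝ => (1 / 2) * (x - o) ^ 2 + lam * |o|)
      (if |x| ≤ lam then x ^ 2 / 2 else lam * |x| - lam ^ 2 / 2) := by
  split_ifs with h
  · refine ⟨⟨0, by simp only [sub_zero, abs_zero, mul_zero, add_zero]; ring⟩, ?_⟩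
    rintro _ ⟨o, rfl⟩
    exact sq_div_two_le_of_abs_le h o
  · refine ⟨⟨_, penalized_sq_soft_threshold hlam.le (not_le.mp h)⟩, ?_⟩
    rintro _ ⟨o, rfl⟩
    exact mul_abs_sub_sq_div_two_le hlam.le o
end

section
/- The group MCP loss function ρ^{gMCP}_{λ,γ}(z), defined as ‖z‖₂²/2 for ‖z‖₂ ≤ λ, (γλ‖z‖₂/(γ-1)) - ‖z‖₂²/(2(γ-1)) - γλ²/(2(γ-1)) for λ ≤ ‖z‖₂ ≤ γλ, and γλ²/2 for ‖z‖₂ > γλ, is continuous on ℝ^p and its gradient satisfies ∇ρ^{gMCP}_{λ,γ}(z) = z - Θ^{gMCP}(z; λ, γ) for all z with ‖z‖₂ ∉ {λ, γλ}. -/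
/-- Group soft-thresholding `S(o; λ) = (1 - λ/‖o‖₂)₊ o`. -/
noncomputable def groupSoftThresh (p : ℕ) (lam : ℝ) (o : EuclideanSpace ℝ (Fin p)) :
    EuclideanSpace ℝ (Fin p) :=
  max 0 (1 - lam / ‖o‖) • o

/-- Group MCP thresholding function. -/
noncomputable def groupMCPThresh (p : ℕ) (lam gam : ℝ) (o : EuclideanSpace ℝ (Fin p)) :
    EuclideanSpace ℝ (Fin p) :=
  if ‖o‖ ≤ gam * lam then (gam / (gam - 1)) • groupSoftThresh p lam o else o

/-- Group MCP loss function `ρ^{gMCP}_{λ,γ}`. -/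
noncomputable def groupMCPLoss (p : ℕ) (lam gam : ℝ) (z : EuclideanSpace ℝ (Fin p)) : ℝ :=
  if ‖z‖ ≤ lam then ‖z‖ ^ 2 / 2
  else if ‖z‖ ≤ gam * lam then
    gam * lam * ‖z‖ / (gam - 1) - ‖z‖ ^ 2 / (2 * (gam - 1)) - gam * lam ^ 2 / (2 * (gam - 1))
  else gam * lam ^ 2 / 2

/-! On each of the three open shells `‖z‖ < λ`, `λ < ‖z‖ < γλ`, `γλ < ‖z‖` the loss agrees near `z`
with a smooth radial function `φ(‖z‖)`: `‖z‖²/2`, a quadratic in `‖z‖` with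
`φ'(t) = (γλ - t)/(γ - 1)`, and a constant. The chain rule `∇(φ ∘ ‖·‖)(z) = φ'(‖z‖) z / ‖z‖`
then gives `z`, `z - Θ(z)` and `0`, which is `z - Θ(z)` in every case. Continuity holds because
the three pieces agree at `‖z‖ = λ` and `‖z‖ = γλ`. -/

open Filter Topology

section RadialGradient

variable {E : Type*} [NormedAddCommGroup E] [InnerProductSpace ℝ E]

theorem hasFDerivAt_norm_of_ne_zero {x : E} (hx : x ≠ 0) :
    HasFDerivAt (fun y : E => ‖y‖) (‖x‖⁻¹ • innerSL ℝ x) x := by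
  have h := (Real.hasDerivAt_sqrt (pow_pos (norm_pos_iff.mpr hx) 2).ne').comp_hasFDerivAt x
    (hasStrictFDerivAt_norm_sq x).hasFDerivAt
  simp only [Function.comp_def, Real.sqrt_sq (norm_nonneg _)] at h
  refine h.congr_fderiv ?_
  ext y
  simp
  field_simp

variable [CompleteSpace E]

theorem hasGradientAt_norm_sq_div_two (x : E) : HasGradientAt (fun y : E => ‖y‖ ^ 2 / 2) x x := by
  have h := (hasStrictFDerivAt_norm_sq x).hasFDerivAt.mul_const (2⁻¹ : ℝ)
  simp only [← div_eq_mul_inv] at h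
  rw [hasGradientAt_iff_hasFDerivAt]
  refine h.congr_fderiv ?_
  ext y
  simp

theorem HasDerivAt.hasGradientAt_comp_norm {f : ℝ → ℝ} {f' : ℝ} {x : E}
    (hf : HasDerivAt f f' ‖x‖) (hx : x ≠ 0) :
    HasGradientAt (fun y : E => f ‖y‖) ((f' / ‖x‖) • x) x := by
  rw [hasGradientAt_iff_hasFDerivAt]
  refine (hf.comp_hasFDerivAt x (hasFDerivAt_norm_of_ne_zero hx)).congr_fderiv ?_
  ext y
  simp
  ring

end RadialGradient

section GroupMCP

variable {p : ℕ} {lam gam : ℝ}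

theorem groupSoftThresh_of_norm_le {o : EuclideanSpace ℝ (Fin p)} (h : ‖o‖ ≤ lam) :
    groupSoftThresh p lam o = 0 := by
  rcases (norm_nonneg o).eq_or_lt with ho | ho
  · simp [groupSoftThresh, norm_eq_zero.mp ho.symm]
  · simp [groupSoftThresh, (one_le_div₀ ho).mpr h]

theorem groupSoftThresh_of_lt_norm {o : EuclideanSpace ℝ (Fin p)} (h : lam < ‖o‖) :
    groupSoftThresh p lam o = (1 - lam / ‖o‖) • o := by
  rw [groupSoftThresh, max_eq_right (sub_nonneg.mpr (div_le_one_of_le₀ h.le (norm_nonneg o)))]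

theorem continuous_groupMCPLoss (hlam : 0 ≤ lam) (hgam : 1 < gam) :
    Continuous (groupMCPLoss p lam gam) := by
  have hgam' : gam - 1 ≠ 0 := sub_ne_zero.mpr hgam.ne'
  refine Continuous.if_le (by fun_prop) ?_ continuous_norm continuous_const ?_
  · refine Continuous.if_le (by fun_prop) continuous_const continuous_norm
      continuous_const fun z hz => ?_
    rw [hz]
    field_simp
    ring
  · intro z hz
    rw [hz, if_pos (le_mul_of_one_le_left hlam hgam.le)]
    field_simp
    ring

theorem hasGradientAt_groupMCPLoss_of_norm_lt (hgam : 1 ≤ gam) {z : EuclideanSpace ℝ (Fin p)}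
    (h : ‖z‖ < lam) :
    HasGradientAt (groupMCPLoss p lam gam) (z - groupMCPThresh p lam gam z) z := by
  have hloss : groupMCPLoss p lam gam =ᶠ[𝓝 z] fun y => ‖y‖ ^ 2 / 2 :=
    ((continuous_norm.tendsto z).eventually (gt_mem_nhds h)).mono fun y hy => if_pos hy.le
  have hlam : lam ≤ gam * lam := le_mul_of_one_le_left ((norm_nonneg z).trans h.le) hgam
  rw [groupMCPThresh, if_pos (h.le.trans hlam), groupSoftThresh_of_norm_le h.le, smul_zero,
    sub_zero]
  exact (hasGradientAt_norm_sq_div_two z).congr_of_eventuallyEq hloss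

theorem hasGradientAt_groupMCPLoss_of_lt_norm_of_norm_lt (hlam : 0 ≤ lam) (hgam : gam ≠ 1)
    {z : EuclideanSpace ℝ (Fin p)} (h₁ : lam < ‖z‖) (h₂ : ‖z‖ < gam * lam) :
    HasGradientAt (groupMCPLoss p lam gam) (z - groupMCPThresh p lam gam z) z := by
  have hgam' : gam - 1 ≠ 0 := sub_ne_zero.mpr hgam
  have hz : ‖z‖ ≠ 0 := (hlam.trans_lt h₁).ne'
  set f : ℝ → ℝ := fun t =>
    gam * lam * t / (gam - 1) - t ^ 2 / (2 * (gam - 1)) - gam * lam ^ 2 / (2 * (gam - 1))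
  have hloss : groupMCPLoss p lam gam =ᶠ[𝓝 z] fun y => f ‖y‖ :=
    ((continuous_norm.tendsto z).eventually (Ioo_mem_nhds h₁ h₂)).mono fun y hy =>
      (if_neg hy.1.not_ge).trans (if_pos hy.2.le)
  have hf : HasDerivAt f ((gam * lam - ‖z‖) / (gam - 1)) ‖z‖ := by
    refine (((((hasDerivAt_id ‖z‖).const_mul (gam * lam)).div_const (gam - 1)).sub
      ((hasDerivAt_pow 2 ‖z‖).div_const (2 * (gam - 1)))).sub_const _).congr_deriv ?_
    field_simp
    ring
  have hthresh : z - groupMCPThresh p lam gam z = ((gam * lam - ‖z‖) / (gam - 1) / ‖z‖) • z := by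
    rw [groupMCPThresh, if_pos h₂.le, groupSoftThresh_of_lt_norm h₁, smul_smul]
    nth_rewrite 1 [← one_smul ℝ z]
    rw [← sub_smul]
    congr 1
    field_simp
    ring
  rw [hthresh]
  exact (hf.hasGradientAt_comp_norm (norm_ne_zero_iff.mp hz)).congr_of_eventuallyEq hloss

theorem hasGradientAt_groupMCPLoss_of_lt_norm (hlam : 0 ≤ lam) (hgam : 1 ≤ gam)
    {z : EuclideanSpace ℝ (Fin p)} (h : gam * lam < ‖z‖) :
    HasGradientAt (groupMCPLoss p lam gam) (z - groupMCPThresh p lam gam z) z := by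
  have hloss : groupMCPLoss p lam gam =ᶠ[𝓝 z] fun _ => gam * lam ^ 2 / 2 :=
    ((continuous_norm.tendsto z).eventually (lt_mem_nhds h)).mono fun y hy =>
      (if_neg ((le_mul_of_one_le_left hlam hgam).trans_lt hy).not_ge).trans (if_neg hy.not_ge)
  rw [groupMCPThresh, if_neg h.not_ge, sub_self]
  exact (hasGradientAt_const z _).congr_of_eventuallyEq hloss

end GroupMCP

theorem stmt_13 (p : ℕ) (lam gam : ℝ) (hlam : 0 < lam) (hgam : 1 < gam) :
    Continuous (groupMCPLoss p lam gam) ∧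
    (∀ z : EuclideanSpace ℝ (Fin p), ‖z‖ ≠ lam → ‖z‖ ≠ gam * lam →
      gradient (groupMCPLoss p lam gam) z = z - groupMCPThresh p lam gam z) := by
  refine ⟨continuous_groupMCPLoss hlam.le hgam, fun z h₁ h₂ => HasGradientAt.gradient ?_⟩
  rcases h₁.lt_or_gt with h₁ | h₁
  · exact hasGradientAt_groupMCPLoss_of_norm_lt hgam.le h₁
  rcases h₂.lt_or_gt with h₂ | h₂
  · exact hasGradientAt_groupMCPLoss_of_lt_norm_of_norm_lt hlam.le hgam.ne' h₁ h₂
  · exact hasGradientAt_groupMCPLoss_of_lt_norm hlam.le hgam.le h₂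
end

section
/- Let Θ : ℝ^p → ℝ^p with ψ(o) = o - Θ(o), and let ρ : ℝ^p → ℝ be differentiable with ∇ρ = ψ. Suppose (Û, Ô) ∈ ℝ^{n×p} × ℝ^{n×p} satisfies (i) ô_i = Θ(x_i - û_i) for each i, and (ii) vec(Û) minimizes u ↦ (1/2)‖vec(X) - u - vec(Ô)‖₂² + λ₁ g(u) for a convex function g : ℝ^{np} → ℝ. Then 0 ∈ -Ψ(X - Û) + λ₁ ∂g(vec(Û)), where Ψ(X - Û) stacks the vectors ψ(x_i - û_i); equivalently, Û is a stationary point of u ↦ Σᵢ ρ(x_i - u_i) + λ₁ g(u). -/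
/-!
By (i), the `i`-th block of `x - u - o` is `ψ(x_i - u_i)`, so the claim says that `x - o - u`
lies in `λ₁ ∂g(u)`. This is the first-order optimality condition of the proximal problem (ii):
comparing `u` with `u + t (w - u)` and letting `t → 0⁺` gives
`⟪x - o - u, w - u⟫ ≤ λ₁ (g w - g u)` for all `w`. For `λ₁ > 0` divide by `λ₁`; for `λ₁ = 0`
the inequality forces `x - o - u = 0`, and any subgradient of `g` at `u` will do. Subgradients
exist because a convex function on a finite-dimensional space is continuous, so its strict
epigraph is an open convex set that Hahn–Banach separates from `(u, g u)`.
-/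

open RealInnerProductSpace Set Filter Topology

section Subgradient

theorem ConvexOn.exists_strongDual_subgradient {E : Type*} [TopologicalSpace E] [AddCommGroup E]
    [Module ℝ E] [IsTopologicalAddGroup E] [ContinuousSMul ℝ E] {g : E → ℝ}
    (hg : ConvexOn ℝ univ g) (hgc : Continuous g) (u : E) :
    ∃ φ : StrongDual ℝ E, ∀ w, g u + φ (w - u) ≤ g w := by
  have hS : IsOpen {q : E × ℝ | q.1 ∈ univ ∧ g q.1 < q.2} := by
    simpa using isOpen_lt (hgc.comp continuous_fst) continuous_snd
  obtain ⟨f, hf⟩ := geometric_hahn_banach_open_point hg.convex_strict_epigraph hS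
    (x := (u, g u)) (by simp)
  set c := f (0, 1)
  have hf_apply (w : E) (t : ℝ) : f (w, t) = f (w, 0) + t * c := by
    have : ((w, t) : E × ℝ) = (w, 0) + t • (0, 1) := by ext <;> simp
    rw [this, map_add, map_smul, smul_eq_mul]
  have hc : c < 0 := by
    have := hf (u, g u + 1) (by simp)
    rw [hf_apply u (g u + 1), hf_apply u (g u)] at this
    linarith
  -- `(w, g w)` is a limit of points `(w, t)`, `t > g w`, of the strict epigraph.
  have hle (w : E) : f (w, g w) ≤ f (u, g u) := by
    have hcont : Continuous fun t => f (w, t) := by fun_prop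
    refine le_of_tendsto (x := 𝓝[>] g w) ((hcont.tendsto (g w)).mono_left nhdsWithin_le_nhds) ?_
    exact eventually_nhdsWithin_of_forall fun t ht => (hf (w, t) ⟨trivial, ht⟩).le
  refine ⟨(-c)⁻¹ • f.comp (.inl ℝ E ℝ), fun w => ?_⟩
  have hw := hle w
  rw [hf_apply w, hf_apply u] at hw
  have : (-c)⁻¹ * (f (w, 0) - f (u, 0)) ≤ g w - g u := by
    rw [inv_mul_le_iff₀ (neg_pos.mpr hc)]
    linarith
  simp only [FunLike.coe_smul, Pi.smul_apply, ContinuousLinearMap.comp_apply,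
    ContinuousLinearMap.inl_apply, map_sub, smul_eq_mul]
  linarith

variable {E : Type*} [NormedAddCommGroup E] [InnerProductSpace ℝ E] [FiniteDimensional ℝ E]

theorem ConvexOn.exists_subgradient {g : E → ℝ} (hg : ConvexOn ℝ univ g) (u : E) :
    ∃ v : E, ∀ w, g u + ⟪v, w - u⟫ ≤ g w := by
  obtain ⟨φ, hφ⟩ := hg.exists_strongDual_subgradient
    (continuousOn_univ.mp (hg.continuousOn isOpen_univ)) u
  exact ⟨(InnerProductSpace.toDual ℝ E).symm φ, by simpa using hφ⟩

theorem ConvexOn.exists_subgradient_smul_eq {g : E → ℝ} (hg : ConvexOn ℝ univ g)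
    {lam : ℝ} (hlam : 0 ≤ lam) {u d : E} (hd : ∀ w, ⟪d, w - u⟫ ≤ lam * (g w - g u)) :
    ∃ v : E, (∀ w, g u + ⟪v, w - u⟫ ≤ g w) ∧ d = lam • v := by
  rcases hlam.eq_or_lt with rfl | hpos
  · obtain ⟨v, hv⟩ := hg.exists_subgradient u
    have hd0 : d = 0 := real_inner_self_nonpos.mp (by simpa using hd (u + d))
    exact ⟨v, hv, by simp [hd0]⟩
  · refine ⟨lam⁻¹ • d, fun w => ?_, by rw [smul_inv_smul₀ hpos.ne']⟩
    have := mul_le_mul_of_nonneg_left (hd w) (inv_nonneg.mpr hlam)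
    rw [inv_mul_cancel_left₀ hpos.ne'] at this
    rw [real_inner_smul_left]
    linarith

end Subgradient

section Prox

variable {E : Type*} [NormedAddCommGroup E] [InnerProductSpace ℝ E]

theorem inner_sub_le_of_forall_prox_le {g : E → ℝ} (hg : ConvexOn ℝ univ g)
    {lam : ℝ} (hlam : 0 ≤ lam) {a u : E}
    (hu : ∀ w, (1 / 2) * ‖a - u‖ ^ 2 + lam * g u ≤ (1 / 2) * ‖a - w‖ ^ 2 + lam * g w) (w : E) :
    ⟪a - u, w - u⟫ ≤ lam * (g w - g u) := by
  set d := a - u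
  set z := w - u
  have hstep {t : ℝ} (ht : t ∈ Ioc 0 1) : ⟪d, z⟫ ≤ t / 2 * ‖z‖ ^ 2 + lam * (g w - g u) := by
    have hmin := hu (u + t • z)
    have hsub : a - (u + t • z) = d - t • z := by simp only [d]; abel
    have hnorm : ‖d - t • z‖ ^ 2 = ‖d‖ ^ 2 - 2 * (t * ⟪d, z⟫) + t ^ 2 * ‖z‖ ^ 2 := by
      rw [norm_sub_sq_real, real_inner_smul_right, norm_smul, Real.norm_eq_abs, mul_pow, sq_abs]
    have hconv : g (u + t • z) ≤ (1 - t) * g u + t * g w := by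
      have : u + t • z = (1 - t) • u + t • w := by module
      rw [this]
      exact hg.2 trivial trivial (by linarith [ht.2]) ht.1.le (by ring)
    rw [hsub, hnorm] at hmin
    have := mul_le_mul_of_nonneg_left hconv hlam
    refine le_of_mul_le_mul_left ?_ ht.1
    nlinarith
  have hlim : Tendsto (fun t : ℝ => t / 2 * ‖z‖ ^ 2 + lam * (g w - g u)) (𝓝[>] 0)
      (𝓝 (lam * (g w - g u))) := by
    have := ((by fun_prop : Continuous fun t : ℝ => t / 2 * ‖z‖ ^ 2 + lam * (g w - g u)).tendsto 0)
    simpa using this.mono_left nhdsWithin_le_nhds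
  exact ge_of_tendsto hlim (eventually_of_mem (Ioc_mem_nhdsGT one_pos) fun t ht => hstep ht)

end Prox

theorem stmt_17_general (n p : ℕ)
    (Θ : EuclideanSpace ℝ (Fin p) → EuclideanSpace ℝ (Fin p))
    (g : PiLp 2 (fun _ : Fin n => EuclideanSpace ℝ (Fin p)) → ℝ)
    (hg : ConvexOn ℝ Set.univ g)
    (lam1 : ℝ) (hlam1 : 0 ≤ lam1)
    (x u o : PiLp 2 (fun _ : Fin n => EuclideanSpace ℝ (Fin p)))
    (hO : ∀ i : Fin n, o i = Θ (x i - u i))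
    (hU : ∀ w : PiLp 2 (fun _ : Fin n => EuclideanSpace ℝ (Fin p)),
      (1 / 2) * ‖x - u - o‖ ^ 2 + lam1 * g u ≤ (1 / 2) * ‖x - w - o‖ ^ 2 + lam1 * g w) :
    ∃ v : PiLp 2 (fun _ : Fin n => EuclideanSpace ℝ (Fin p)),
      (∀ w, g u + ⟪v, w - u⟫ ≤ g w) ∧
      (fun i : Fin n => (x i - u i) - Θ (x i - u i)) = lam1 • v := by
  simp only [sub_right_comm x _ o] at hU
  obtain ⟨v, hv, hd⟩ := hg.exists_subgradient_smul_eq hlam1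
    (inner_sub_le_of_forall_prox_le hg hlam1 hU)
  refine ⟨v, hv, funext fun i => ?_⟩
  rw [← WithLp.ofLp_smul, ← hd, ← hO i]
  simp only [PiLp.sub_apply, sub_right_comm]

theorem stmt_17 (n p : ℕ)
    (Θ : EuclideanSpace ℝ (Fin p) → EuclideanSpace ℝ (Fin p))
    (ρ : EuclideanSpace ℝ (Fin p) → ℝ)
    (hρdiff : Differentiable ℝ ρ)
    (hρgrad : ∀ o : EuclideanSpace ℝ (Fin p), gradient ρ o = o - Θ o)
    (g : PiLp 2 (fun _ : Fin n => EuclideanSpace ℝ (Fin p)) → ℝ)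
    (hg : ConvexOn ℝ Set.univ g)
    (lam1 : ℝ) (hlam1 : 0 ≤ lam1)
    (x u o : PiLp 2 (fun _ : Fin n => EuclideanSpace ℝ (Fin p)))
    (hO : ∀ i : Fin n, o i = Θ (x i - u i))
    (hU : ∀ w : PiLp 2 (fun _ : Fin n => EuclideanSpace ℝ (Fin p)),
      (1 / 2) * ‖x - u - o‖ ^ 2 + lam1 * g u ≤ (1 / 2) * ‖x - w - o‖ ^ 2 + lam1 * g w) :
    ∃ v : PiLp 2 (fun _ : Fin n => EuclideanSpace ℝ (Fin p)),
      (∀ w, g u + ⟪v, w - u⟫ ≤ g w) ∧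
      (fun i : Fin n => (x i - u i) - Θ (x i - u i)) = lam1 • v :=
  stmt_17_general n p Θ g hg lam1 hlam1 x u o hO hU
end
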